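/- arXiv:2105.00657 — 4 statements merged into one kernel-verified Lean document; each statement's English description precedes it below -/
import Mathlib

section
/- Let n ≥ 1, y_r ∈ ℝⁿ, z, τ ∈ ℝ, γ ∈ ℝⁿ, and let Γ be a symmetric n×n real matrix. Then the inequality τ + 2γᵀy + yᵀΓy ≥ −‖y_r − y‖₂² − z holds for every y ∈ ℝⁿ if and only if the (n+1)×(n+1) block matrix [[Γ + I, γ − y_r], [(γ − y_r)ᵀ, τ + z + ‖y_r‖₂²]] is positive semidefinite, where I is the n×n identity matrix. -/
open Matrix

/-- The `(n+1) × (n+1)` block matrix `[[A, b], [bᵀ, c]]`. -/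
def blk1 {n : ℕ} (A : Matrix (Fin n) (Fin n) ℝ) (b : Fin n → ℝ) (c : ℝ) :
    Matrix (Fin n ⊕ Fin 1) (Fin n ⊕ Fin 1) ℝ :=
  Matrix.fromBlocks A (Matrix.replicateCol (Fin 1) b) (Matrix.replicateRow (Fin 1) b) (Matrix.of fun _ _ => c)

lemma blkform {n : ℕ} (M : Matrix (Fin n) (Fin n) ℝ) (b : Fin n → ℝ) (c : ℝ) (y : Fin n → ℝ) (t : ℝ) :
    (Sum.elim y (fun _ => t)) ⬝ᵥ (blk1 M b c).mulVec (Sum.elim y (fun _ => t))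
    = y ⬝ᵥ M.mulVec y + 2 * t * (b ⬝ᵥ y) + c * t^2 := by
  simp only [blk1, dotProduct, Fintype.sum_sum_type, Matrix.mulVec, Fin.sum_univ_one,
    Matrix.replicateCol, Matrix.replicateRow, Sum.elim_inl, Sum.elim_inr, Matrix.of_apply,
    Matrix.fromBlocks_apply₁₁, Matrix.fromBlocks_apply₁₂, Matrix.fromBlocks_apply₂₁,
    Matrix.fromBlocks_apply₂₂, Finset.mul_sum, Finset.sum_mul, Finset.sum_add_distrib, mul_add]
  ring_nf
  rw [add_assoc, ← Finset.sum_add_distrib]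
  congr 1
  · apply Finset.sum_congr rfl; intro i _; ring

lemma homog {n : ℕ} (M : Matrix (Fin n) (Fin n) ℝ) (b : Fin n → ℝ) (c : ℝ)
    (h : ∀ y : Fin n → ℝ, 0 ≤ y ⬝ᵥ M.mulVec y + 2 * (b ⬝ᵥ y) + c)
    (y : Fin n → ℝ) (t : ℝ) :
    0 ≤ y ⬝ᵥ M.mulVec y + 2 * t * (b ⬝ᵥ y) + c * t ^ 2 := by
  set A := y ⬝ᵥ M.mulVec y with hA
  set B := b ⬝ᵥ y with hB
  have hscale : ∀ s : ℝ, 0 ≤ s ^ 2 * A + 2 * s * B + c := by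
    intro s
    have := h (s • y)
    simpa [smul_dotProduct, dotProduct_smul, Matrix.mulVec_smul, hA, hB,
      smul_eq_mul, mul_assoc, mul_comm, mul_left_comm, sq] using this
  have hA0 : 0 ≤ A := by
    by_contra hneg
    push_neg at hneg
    have hApos : 0 < -A := by linarith
    have hD : (0:ℝ) < 2 * |B| + |c| + 1 := by positivity
    obtain ⟨s, hsdef⟩ : ∃ s : ℝ, s = (2 * |B| + |c| + 1) / (-A) + 1 := ⟨_, rfl⟩
    have hq : (0:ℝ) ≤ (2 * |B| + |c| + 1) / (-A) := le_of_lt (div_pos hD hApos)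
    have hs1 : 1 ≤ s := by rw [hsdef]; linarith
    have hsA : 2 * |B| + |c| + 1 ≤ -A * s := by
      rw [hsdef, mul_add, mul_one, mul_div_cancel₀ _ (ne_of_gt hApos)]
      linarith
    have hspos : (0:ℝ) ≤ s := by linarith
    have hB1 : B ≤ |B| := le_abs_self B
    have hB2 : -B ≤ |B| := neg_le_abs B
    have hc1 : c ≤ |c| := le_abs_self c
    have hsc := hscale s
    nlinarith [mul_le_mul_of_nonneg_left hsA hspos,
      mul_nonneg (by linarith : (0:ℝ) ≤ s - 1) (by positivity : (0:ℝ) ≤ |c| + 1),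
      mul_le_mul_of_nonneg_left hB1 hspos, mul_le_mul_of_nonneg_left hB2 hspos, hsc, hc1]
  rcases eq_or_ne t 0 with ht | ht
  · simpa [ht] using hA0
  · have h2 := hscale t⁻¹
    have ht2 : (0:ℝ) < t ^ 2 := by positivity
    have := mul_nonneg (le_of_lt ht2) h2
    have key : t ^ 2 * ((t⁻¹) ^ 2 * A + 2 * t⁻¹ * B + c) = A + 2 * t * B + c * t ^ 2 := by
      field_simp
    linarith [key ▸ this]

/-- `τ + 2γᵀy + yᵀΓy ≥ −‖y_r − y‖₂² − z` for all `y` iff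
`[[Γ + I, γ − y_r], [(γ − y_r)ᵀ, τ + z + ‖y_r‖₂²]]` is positive semidefinite. -/
theorem quadratic_loss_bound_iff_block_posSemidef
    (n : ℕ) (hn : 1 ≤ n) (yr : Fin n → ℝ) (z τ : ℝ) (γ : Fin n → ℝ)
    (Γ : Matrix (Fin n) (Fin n) ℝ) (hΓ : Γ.IsSymm) :
    (∀ y : Fin n → ℝ,
        -(∑ i, (yr i - y i) ^ 2) - z ≤ τ + 2 * (γ ⬝ᵥ y) + y ⬝ᵥ Γ.mulVec y) ↔
      (blk1 (Γ + 1) (γ - yr) (τ + z + ∑ i, (yr i) ^ 2)).PosSemidef := by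
  set M := Γ + 1 with hM
  set b := γ - yr with hb
  set c := τ + z + ∑ i, (yr i) ^ 2 with hc
  -- rewrite the LHS as a standard quadratic nonnegativity
  have hquad : ∀ y : Fin n → ℝ,
      (-(∑ i, (yr i - y i) ^ 2) - z ≤ τ + 2 * (γ ⬝ᵥ y) + y ⬝ᵥ Γ.mulVec y) ↔
      0 ≤ y ⬝ᵥ M.mulVec y + 2 * (b ⬝ᵥ y) + c := by
    intro y
    have hMy : y ⬝ᵥ M.mulVec y = y ⬝ᵥ Γ.mulVec y + y ⬝ᵥ y := by
      simp [hM, Matrix.add_mulVec, dotProduct_add, Matrix.one_mulVec]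
    have hby : b ⬝ᵥ y = γ ⬝ᵥ y - yr ⬝ᵥ y := by
      simp [hb, sub_dotProduct]
    have hexp : (∑ i, (yr i - y i) ^ 2) = (∑ i, (yr i)^2) - 2 * (yr ⬝ᵥ y) + y ⬝ᵥ y := by
      simp only [dotProduct, Finset.mul_sum, ← Finset.sum_sub_distrib, ← Finset.sum_add_distrib]
      apply Finset.sum_congr rfl; intro i _; ring
    rw [hMy, hby, hexp]
    constructor <;> intro h <;> linarith
  constructor
  · intro h
    refine Matrix.posSemidef_iff_dotProduct_mulVec.mpr ⟨?_, ?_⟩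
    · -- Hermitian
      have hMsym : M.IsSymm := by
        rw [Matrix.IsSymm, hM, Matrix.transpose_add, hΓ, Matrix.transpose_one]
      rw [Matrix.IsHermitian]
      ext i j
      cases i <;> cases j <;>
        simp [blk1, Matrix.conjTranspose, Matrix.fromBlocks_transpose, Matrix.replicateCol, Matrix.replicateRow]
      · exact congrFun (congrFun hMsym _) _
    · intro x
      have hx : x = Sum.elim (fun i => x (Sum.inl i)) (fun _ : Fin 1 => x (Sum.inr 0)) := by
        funext i
        cases i with
        | inl i => rfl
        | inr i => simp [Subsingleton.elim i 0]
      rw [hx]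
      simp only [star_trivial]
      rw [blkform]
      exact homog M b c (fun y => (hquad y).mp (h y)) _ _
  · intro hpsd y
    rw [hquad y]
    have := hpsd.dotProduct_mulVec_nonneg (Sum.elim y (fun _ : Fin 1 => (1:ℝ)))
    simp only [star_trivial] at this
    rw [blkform] at this
    simpa using this
end

section
/- Let n ≥ 1, let λ ≥ 0 be a real number, let Γ be a symmetric n×n real matrix, and let Z and Σ̃ be positive semidefinite n×n real matrices. If the 2n×2n block matrix [[λI − Γ, λΣ̃^{1/2}], [λΣ̃^{1/2}, Z]] is positive semidefinite, then for every positive semidefinite n×n matrix Σ one has Tr(ΓΣ) + 2λ·Tr[(Σ^{1/2} Σ̃ Σ^{1/2})^{1/2}] ≤ λ·Tr(Σ) + Tr(Z). -/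
/-!
Write `T = Σ^{1/2}` and `W = Σ̃^{1/2}`. The polar decomposition of `W T` gives a partial
isometry `U` with `Uᵀ W T = (T Σ̃ T)^{1/2}`. Compressing the positive semidefinite block matrix
by the column `[T; -U]` yields a positive semidefinite matrix of trace
`Tr(T (λI − Γ) T) − 2λ Tr (T Σ̃ T)^{1/2} + Tr(Uᵀ Z U)`, and `Tr(Uᵀ Z U) ≤ Tr Z` because `U Uᵀ`
is an orthogonal projection.
-/

open Matrix
open scoped Classical

/-- The positive semidefinite square root of a matrix (junk value `0` if the matrix is
not positive semidefinite). -/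
noncomputable def psdSqrt {n : ℕ} (A : Matrix (Fin n) (Fin n) ℝ) :
    Matrix (Fin n) (Fin n) ℝ :=
  if h : A.PosSemidef then
    (h.1.eigenvectorUnitary : Matrix (Fin n) (Fin n) ℝ) *
      diagonal ((↑) ∘ Real.sqrt ∘ h.1.eigenvalues) *
      (star h.1.eigenvectorUnitary : Matrix (Fin n) (Fin n) ℝ)
  else 0

open scoped MatrixOrder ComplexOrder

namespace Matrix

variable {l m k 𝕜 : Type*} [RCLike 𝕜] [Fintype l] [Fintype m]

lemma conjTranspose_fromRows_mul_fromBlocks_mul_fromRows {R : Type*} [Semiring R] [Star R]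
    (A : Matrix m m R) (B : Matrix m l R) (C : Matrix l m R) (D : Matrix l l R)
    (X : Matrix m k R) (Y : Matrix l k R) :
    (fromRows X Y)ᴴ * fromBlocks A B C D * fromRows X Y =
      Xᴴ * A * X + Xᴴ * B * Y + Yᴴ * C * X + Yᴴ * D * Y := by
  rw [Matrix.mul_assoc, fromBlocks_mul_fromRows, conjTranspose_fromRows_eq_fromCols_conjTranspose,
    fromCols_mul_fromRows]
  simp only [Matrix.mul_add, Matrix.mul_assoc]
  abel

lemma PosSemidef.trace_conjTranspose_mul_mul_le [DecidableEq l] {Z : Matrix l l 𝕜}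
    (hZ : Z.PosSemidef) {U : Matrix l m 𝕜} (hU : U * Uᴴ * U = U) :
    (Uᴴ * Z * U).trace ≤ Z.trace := by
  set G : Matrix l l 𝕜 := 1 - U * Uᴴ
  have hGG : G * G = G := by
    have : U * Uᴴ * (U * Uᴴ) = U * Uᴴ := by rw [← Matrix.mul_assoc, hU]
    simp only [G, Matrix.mul_sub, Matrix.sub_mul, this, Matrix.mul_one, Matrix.one_mul, sub_self,
      sub_zero]
  have hG : Gᴴ = G := by simp [G, conjTranspose_sub, conjTranspose_mul]
  have key : (Gᴴ * Z * G).trace = Z.trace - (Uᴴ * Z * U).trace := by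
    rw [hG, trace_mul_cycle, hGG, Matrix.sub_mul, trace_sub, Matrix.one_mul,
      trace_mul_cycle Uᴴ Z U]
  exact sub_nonneg.mp (key ▸ (hZ.conjTranspose_mul_mul_same G).trace_nonneg)

lemma PosSemidef.trace_cross_le_of_fromBlocks [DecidableEq l] [Fintype k]
    {A : Matrix m m 𝕜} {B : Matrix m l 𝕜} {C : Matrix l m 𝕜} {D : Matrix l l 𝕜}
    (h : (fromBlocks A B C D).PosSemidef) (X : Matrix m k 𝕜) {U : Matrix l k 𝕜}
    (hU : U * Uᴴ * U = U) :
    (Xᴴ * B * U).trace + (Uᴴ * C * X).trace ≤ (Xᴴ * A * X).trace + D.trace := by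
  have hcompress := (h.conjTranspose_mul_mul_same (fromRows X (-U))).trace_nonneg
  rw [conjTranspose_fromRows_mul_fromBlocks_mul_fromRows] at hcompress
  have hD : D.PosSemidef := h.submatrix Sum.inr
  replace hD := sub_nonneg.mpr (hD.trace_conjTranspose_mul_mul_le hU)
  rw [← sub_nonneg]
  convert add_nonneg hcompress hD using 1
  simp only [conjTranspose_neg, Matrix.mul_neg, Matrix.neg_mul, neg_neg, trace_add, trace_neg]
  abel

variable [DecidableEq m]

lemma IsHermitian.exists_pinv {P : Matrix m m 𝕜} (hP : P.IsHermitian) :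
    ∃ B : Matrix m m 𝕜, B.IsHermitian ∧ Commute P B ∧ P * B * P = P ∧ B * P * B = B := by
  have hP' : IsSelfAdjoint P := hP
  have hcont (f : ℝ → ℝ) : ContinuousOn f (spectrum ℝ P) := P.finite_real_spectrum.continuousOn _
  refine ⟨cfc (·⁻¹ : ℝ → ℝ) P, cfc_predicate _ P, ?_, ?_, ?_⟩
  · simpa only [cfc_id' ℝ P] using cfc_commute_cfc (fun x : ℝ ↦ x) (·⁻¹) P
  · conv_rhs => rw [← cfc_id' ℝ P, ← cfc_congr (fun x _ => mul_inv_mul_cancel x)]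
    rw [cfc_mul _ _ _ (hcont _) (hcont _), cfc_mul _ _ _ (hcont _) (hcont _), cfc_id' ℝ P]
  · conv_rhs => rw [← cfc_congr (fun x _ => inv_inv x ▸ mul_inv_mul_cancel x⁻¹)]
    rw [cfc_mul _ _ _ (hcont _) (hcont _), cfc_mul _ _ _ (hcont _) (hcont _), cfc_id' ℝ P]

/-- Polar decomposition: `U = M |M|⁺`, with `|M|⁺` the pseudo-inverse of `|M| = √(Mᴴ M)`. -/
lemma exists_partialIsometry_conjTranspose_mul_eq_sqrt (M : Matrix l m 𝕜) :
    ∃ U : Matrix l m 𝕜, Uᴴ * M = CFC.sqrt (Mᴴ * M) ∧ U * Uᴴ * U = U := by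
  set P := CFC.sqrt (Mᴴ * M)
  have hPP : P * P = Mᴴ * M :=
    CFC.sqrt_mul_sqrt_self _ (nonneg_iff_posSemidef.mpr (posSemidef_conjTranspose_mul_self M))
  have hP : P.IsHermitian := (nonneg_iff_posSemidef.mp (CFC.sqrt_nonneg _)).isHermitian
  obtain ⟨B, hB, hPB, hPBP, hBPB⟩ := hP.exists_pinv
  have hBM : (M * B)ᴴ * M = P := by
    rw [conjTranspose_mul, hB.eq, Matrix.mul_assoc, ← hPP, ← Matrix.mul_assoc, ← hPB.eq, hPBP]
  refine ⟨M * B, hBM, ?_⟩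
  rw [Matrix.mul_assoc, ← Matrix.mul_assoc (M * B)ᴴ, hBM, Matrix.mul_assoc M,
    ← Matrix.mul_assoc B, hBPB]

end Matrix

lemma psdSqrt_eq_sqrt {n : ℕ} {A : Matrix (Fin n) (Fin n) ℝ} (hA : A.PosSemidef) :
    psdSqrt A = CFC.sqrt A := by
  rw [psdSqrt, dif_pos hA, CFC.sqrt_eq_cfc, cfc_nnreal_eq_real _ A, hA.1.cfc_eq]
  simp [IsHermitian.cfc, Unitary.conjStarAlgAut_apply, Function.comp_def,
    max_eq_left (hA.eigenvalues_nonneg _)]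

lemma posSemidef_psdSqrt {n : ℕ} {A : Matrix (Fin n) (Fin n) ℝ} (hA : A.PosSemidef) :
    (psdSqrt A).PosSemidef :=
  psdSqrt_eq_sqrt hA ▸ nonneg_iff_posSemidef.mp (CFC.sqrt_nonneg A)

lemma psdSqrt_mul_self {n : ℕ} {A : Matrix (Fin n) (Fin n) ℝ} (hA : A.PosSemidef) :
    psdSqrt A * psdSqrt A = A :=
  psdSqrt_eq_sqrt hA ▸ CFC.sqrt_mul_sqrt_self A (nonneg_iff_posSemidef.mpr hA)

lemma exists_partialIsometry_psdSqrt_conj_eq {n : ℕ} {S R : Matrix (Fin n) (Fin n) ℝ}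
    (hS : S.PosSemidef) (hR : R.PosSemidef) :
    ∃ U : Matrix (Fin n) (Fin n) ℝ, U * Uᴴ * U = U ∧
      psdSqrt (psdSqrt S * R * psdSqrt S) = Uᴴ * psdSqrt R * psdSqrt S := by
  set T := psdSqrt S
  set W := psdSqrt R
  have hT : Tᴴ = T := (posSemidef_psdSqrt hS).isHermitian.eq
  have hW : Wᴴ = W := (posSemidef_psdSqrt hR).isHermitian.eq
  have hM : T * R * T = (W * T)ᴴ * (W * T) := by
    simp only [conjTranspose_mul, hT, hW, Matrix.mul_assoc]
    rw [← Matrix.mul_assoc W W, psdSqrt_mul_self hR]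
  obtain ⟨U, hUM, hU⟩ := exists_partialIsometry_conjTranspose_mul_eq_sqrt (W * T)
  refine ⟨U, hU, ?_⟩
  rw [psdSqrt_eq_sqrt (hM ▸ posSemidef_conjTranspose_mul_self _), hM, ← hUM, Matrix.mul_assoc]

theorem trace_bound_of_block_posSemidef_general
    (n : ℕ) (lam : ℝ)
    (Γ : Matrix (Fin n) (Fin n) ℝ)
    (Z SigT : Matrix (Fin n) (Fin n) ℝ) (hSigT : SigT.PosSemidef)
    (hblk : (Matrix.fromBlocks (lam • (1 : Matrix (Fin n) (Fin n) ℝ) - Γ)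
        (lam • psdSqrt SigT) (lam • psdSqrt SigT) Z).PosSemidef) :
    ∀ S : Matrix (Fin n) (Fin n) ℝ, S.PosSemidef →
      (Γ * S).trace + 2 * lam * (psdSqrt (psdSqrt S * SigT * psdSqrt S)).trace ≤
        lam * S.trace + Z.trace := by
  intro S hS
  obtain ⟨U, hU, hP⟩ := exists_partialIsometry_psdSqrt_conj_eq hS hSigT
  set T := psdSqrt S
  set W := psdSqrt SigT
  have hT : Tᴴ = T := (posSemidef_psdSqrt hS).isHermitian.eq
  have hW : Wᴴ = W := (posSemidef_psdSqrt hSigT).isHermitian.eq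
  have hcross := hblk.trace_cross_le_of_fromBlocks T hU
  have hdiag : (Tᴴ * (lam • 1 - Γ) * T).trace = lam * S.trace - (Γ * S).trace := by
    simp only [hT, Matrix.mul_sub, Matrix.sub_mul, Matrix.mul_smul, Matrix.smul_mul,
      Matrix.mul_one, trace_sub, trace_smul, smul_eq_mul]
    rw [trace_mul_cycle, psdSqrt_mul_self hS, trace_mul_comm]
  have hleft : (Tᴴ * (lam • W) * U).trace = lam * (Uᴴ * W * T).trace := by
    rw [← star_trivial (Uᴴ * W * T).trace, ← trace_conjTranspose, conjTranspose_mul,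
      conjTranspose_mul, conjTranspose_conjTranspose, hW]
    simp only [Matrix.mul_smul, Matrix.smul_mul, trace_smul, smul_eq_mul, Matrix.mul_assoc]
  have hright : (Uᴴ * (lam • W) * T).trace = lam * (Uᴴ * W * T).trace := by
    simp only [Matrix.mul_smul, Matrix.smul_mul, trace_smul, smul_eq_mul]
  rw [hP]
  linarith

/-- if `[[λI − Γ, λΣ̃^{1/2}], [λΣ̃^{1/2}, Z]] ⪰ 0` then for every PSD `Σ`,
`Tr(ΓΣ) + 2λ·Tr[(Σ^{1/2} Σ̃ Σ^{1/2})^{1/2}] ≤ λ·Tr(Σ) + Tr(Z)`. -/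
theorem trace_bound_of_block_posSemidef
    (n : ℕ) (hn : 1 ≤ n) (lam : ℝ) (hlam : 0 ≤ lam)
    (Γ : Matrix (Fin n) (Fin n) ℝ) (hΓ : Γ.IsSymm)
    (Z SigT : Matrix (Fin n) (Fin n) ℝ) (hZ : Z.PosSemidef) (hSigT : SigT.PosSemidef)
    (hblk : (Matrix.fromBlocks (lam • (1 : Matrix (Fin n) (Fin n) ℝ) - Γ)
        (lam • psdSqrt SigT) (lam • psdSqrt SigT) Z).PosSemidef) :
    ∀ S : Matrix (Fin n) (Fin n) ℝ, S.PosSemidef →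
      (Γ * S).trace + 2 * lam * (psdSqrt (psdSqrt S * SigT * psdSqrt S)).trace ≤
        lam * S.trace + Z.trace :=
  trace_bound_of_block_posSemidef_general n lam Γ Z SigT hSigT hblk
end

section
/- Let (Ω, F, P) be a probability space, let X : Ω → ℝ be an integrable random variable, and let α ∈ (0,1). If there exists z ∈ ℝ such that z + (1/(1−α))·E[max(X − z, 0)] ≤ 0, then P(X ≤ 0) ≥ α. -/
/-!
Write `I = 𝔼[(X - z)⁺]`. The hypothesis says `I ≤ -z (1 - α)`, and since `I ≥ 0` this forces
`z ≤ 0`. On `{X > 0}` we have `(X - z)⁺ ≥ -z`, so Markov's inequality gives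
`-z · P(X > 0) ≤ I ≤ -z (1 - α)`, i.e. `P(X > 0) ≤ 1 - α` when `z < 0`. When `z = 0` the
hypothesis reads `𝔼[X⁺] ≤ 0`, so `X ≤ 0` almost surely.
-/

open MeasureTheory

namespace MeasureTheory

variable {Ω : Type*} [MeasurableSpace Ω] {μ : Measure Ω} {X : Ω → ℝ}

lemma neg_mul_measureReal_pos_le_integral_max_sub [IsFiniteMeasure μ] (hX : Integrable X μ)
    {z : ℝ} (hz : z ≤ 0) : -z * μ.real {ω | 0 < X ω} ≤ ∫ ω, max (X ω - z) 0 ∂μ := by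
  have hsub : {ω | 0 < X ω} ⊆ {ω | -z ≤ max (X ω - z) 0} := fun ω (hω : 0 < X ω) =>
    show -z ≤ max (X ω - z) 0 from le_max_of_le_left (by linarith)
  calc -z * μ.real {ω | 0 < X ω} ≤ -z * μ.real {ω | -z ≤ max (X ω - z) 0} :=
        mul_le_mul_of_nonneg_left (measureReal_mono hsub) (neg_nonneg.2 hz)
    _ ≤ ∫ ω, max (X ω - z) 0 ∂μ :=
        mul_meas_ge_le_integral_of_nonneg (.of_forall fun _ => le_max_right _ _)
          ((hX.sub (integrable_const z)).pos_part) _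

lemma measure_pos_eq_zero_of_integral_max_nonpos (hX : Integrable X μ)
    (h : ∫ ω, max (X ω) 0 ∂μ ≤ 0) : μ {ω | 0 < X ω} = 0 := by
  have hzero : (fun ω => max (X ω) 0) =ᵐ[μ] 0 :=
    (integral_eq_zero_iff_of_nonneg (fun _ => le_max_right _ _) hX.pos_part).1
      (h.antisymm (integral_nonneg fun _ => le_max_right _ _))
  exact measure_mono_null (fun ω (hω : 0 < X ω) => not_le.2 hω)
    (ae_iff.1 (hzero.mono fun ω hω => by simpa using hω))

lemma measureReal_pos_le_of_cvarObjective_nonpos [IsFiniteMeasure μ] (hX : Integrable X μ)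
    {α z : ℝ} (hα : α < 1) (h : z + (1 / (1 - α)) * ∫ ω, max (X ω - z) 0 ∂μ ≤ 0) :
    μ.real {ω | 0 < X ω} ≤ 1 - α := by
  have hα' : 0 < 1 - α := sub_pos.2 hα
  have hI : ∫ ω, max (X ω - z) 0 ∂μ ≤ -z * (1 - α) := by
    rw [one_div_mul_eq_div, ← le_neg_iff_add_nonpos_left, div_le_iff₀ hα'] at h
    exact h
  have hI0 : 0 ≤ ∫ ω, max (X ω - z) 0 ∂μ := integral_nonneg fun _ => le_max_right _ _
  rcases (show z ≤ 0 by nlinarith).lt_or_eq with hz | rfl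
  · have := (neg_mul_measureReal_pos_le_integral_max_sub hX hz.le).trans hI
    exact le_of_mul_le_mul_left this (neg_pos.2 hz)
  · have hnull := measure_pos_eq_zero_of_integral_max_nonpos hX (by simpa using hI)
    simp [measureReal_def, hnull, hα.le]

lemma ofReal_le_measure_of_measureReal_compl_le [IsProbabilityMeasure μ] {s : Set Ω} {α : ℝ}
    (h : μ.real sᶜ ≤ 1 - α) : ENNReal.ofReal α ≤ μ s := by
  have hcover : 1 ≤ μ.real s + μ.real sᶜ := by
    simpa using measureReal_union_le (μ := μ) s sᶜ
  exact ENNReal.ofReal_le_of_le_toReal (by rw [← measureReal_def]; linarith)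

end MeasureTheory

/-- if the Rockafellar–Uryasev CVaR objective of an integrable random
variable `X` at level `α` is nonpositive at some `z`, then `P(X ≤ 0) ≥ α`. -/
theorem prob_le_of_cvar_nonpos
    {Ω : Type*} [MeasurableSpace Ω] (P : Measure Ω) [IsProbabilityMeasure P]
    (X : Ω → ℝ) (hX : Integrable X P) (α : ℝ) (hα : α ∈ Set.Ioo (0 : ℝ) 1)
    (h : ∃ z : ℝ, z + (1 / (1 - α)) * ∫ ω, max (X ω - z) 0 ∂P ≤ 0) :
    ENNReal.ofReal α ≤ P {ω | X ω ≤ 0} := by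
  obtain ⟨z, hz⟩ := h
  apply ofReal_le_measure_of_measureReal_compl_le
  simpa only [Set.compl_ofPred, not_le] using
    measureReal_pos_le_of_cvarObjective_nonpos hX hα.2 hz
end

section
/- (Attainment of the Rockafellar–Uryasev infimum.) Let (Ω, F, P) be a probability space, let X : Ω → ℝ be an integrable random variable, and let α ∈ (0,1). Define the lower α-quantile q := sInf { z ∈ ℝ : P(X ≤ z) ≥ α }. Then q is a minimizer of the function f(z) := z + (1/(1−α))·E[max(X − z, 0)] over z ∈ ℝ; that is, f(q) = inf_{z ∈ ℝ} f(z), so the infimum in the Rockafellar–Uryasev representation of the conditional value-at-risk is attained. -/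
open MeasureTheory

section aux

variable {Ω : Type*} [MeasurableSpace Ω] (P : Measure Ω) [IsProbabilityMeasure P]

lemma RU_core (X : Ω → ℝ) (hm : Measurable X) (hX : Integrable X P)
    (α : ℝ) (hα : α ∈ Set.Ioo (0 : ℝ) 1) (q z : ℝ)
    (hq1 : ENNReal.ofReal α ≤ P {ω | X ω ≤ q})
    (hq2 : P {ω | X ω < q} ≤ ENNReal.ofReal α) :
    q + (1 / (1 - α)) * ∫ ω, max (X ω - q) 0 ∂P ≤
      z + (1 / (1 - α)) * ∫ ω, max (X ω - z) 0 ∂P := by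
  have h1α : 0 < 1 - α := by linarith [hα.2]
  set c : ℝ := 1 / (1 - α) with hc
  have hcpos : 0 < c := by positivity
  have hc1 : c * (1 - α) = 1 := by rw [hc, one_div, inv_mul_cancel₀ (ne_of_gt h1α)]
  have hIq : Integrable (fun ω => max (X ω - q) 0) P := by
    exact (hX.sub (integrable_const q)).pos_part
  have hIz : Integrable (fun ω => max (X ω - z) 0) P := by
    exact (hX.sub (integrable_const z)).pos_part
  -- general step given a set A
  have key : ∀ A : Set Ω, MeasurableSet A →
      (∀ ω, max (X ω - q) 0 - A.indicator (fun _ => z - q) ω ≤ max (X ω - z) 0) →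
      (∫ ω, max (X ω - q) 0 ∂P) - (P A).toReal * (z - q) ≤ ∫ ω, max (X ω - z) 0 ∂P := by
    intro A hA hpt
    have hInd : Integrable (A.indicator (fun _ => z - q)) P :=
      (integrable_const (z - q)).indicator hA
    have := integral_mono (hIq.sub hInd) hIz hpt
    simp only [Pi.sub_apply] at this
    rw [integral_sub hIq hInd, integral_indicator_const (z - q) hA, smul_eq_mul] at this
    change _ - (P A).toReal * (z - q) ≤ _ at this
    linarith
  rcases le_or_gt q z with hzq | hzq
  · -- use A = {q < X}
    set A : Set Ω := {ω | q < X ω} with hA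
    have hAm : MeasurableSet A := measurableSet_lt measurable_const hm
    have hcompl : A = {ω | X ω ≤ q}ᶜ := by ext ω; simp [hA, not_le]
    have hBm : MeasurableSet {ω | X ω ≤ q} := hm measurableSet_Iic
    have hsum : (P {ω | X ω ≤ q}).toReal + (P A).toReal = 1 := by
      rw [hcompl, ← ENNReal.toReal_add (measure_ne_top _ _) (measure_ne_top _ _),
        measure_add_measure_compl hBm, measure_univ, ENNReal.toReal_one]
    have hα' : α ≤ (P {ω | X ω ≤ q}).toReal :=
      (ENNReal.ofReal_le_iff_le_toReal (measure_ne_top _ _)).1 hq1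
    have hpA : (P A).toReal ≤ 1 - α := by linarith
    have hpt : ∀ ω, max (X ω - q) 0 - A.indicator (fun _ => z - q) ω ≤ max (X ω - z) 0 := by
      intro ω
      by_cases h : q < X ω
      · rw [Set.indicator_of_mem (show ω ∈ A from h)]
        calc max (X ω - q) 0 - (z - q) = (X ω - q) - (z - q) := by
              rw [max_eq_left (by linarith)]
          _ = X ω - z := by ring
          _ ≤ max (X ω - z) 0 := le_max_left _ _
      · rw [Set.indicator_of_notMem (show ω ∉ A from h)]
        push_neg at h
        simp only [sub_zero]
        rw [max_eq_right (by linarith)]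
        exact le_max_right _ _
    have hk := key A hAm hpt
    have hpA0 : 0 ≤ (P A).toReal := ENNReal.toReal_nonneg
    nlinarith [hk, mul_le_mul_of_nonneg_left hpA (le_of_lt hcpos)]
  · -- z < q, use A = {q ≤ X}
    set A : Set Ω := {ω | q ≤ X ω} with hA
    have hAm : MeasurableSet A := measurableSet_le measurable_const hm
    have hcompl : A = {ω | X ω < q}ᶜ := by ext ω; simp [hA, not_lt]
    have hBm : MeasurableSet {ω | X ω < q} := hm measurableSet_Iio
    have hsum : (P {ω | X ω < q}).toReal + (P A).toReal = 1 := by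
      rw [hcompl, ← ENNReal.toReal_add (measure_ne_top _ _) (measure_ne_top _ _),
        measure_add_measure_compl hBm, measure_univ, ENNReal.toReal_one]
    have hα' : (P {ω | X ω < q}).toReal ≤ α := by
      have := ENNReal.toReal_mono ENNReal.ofReal_ne_top hq2
      rwa [ENNReal.toReal_ofReal hα.1.le] at this
    have hpA : 1 - α ≤ (P A).toReal := by linarith
    have hpt : ∀ ω, max (X ω - q) 0 - A.indicator (fun _ => z - q) ω ≤ max (X ω - z) 0 := by
      intro ω
      by_cases h : q ≤ X ω
      · rw [Set.indicator_of_mem (show ω ∈ A from h)]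
        calc max (X ω - q) 0 - (z - q) = (X ω - q) - (z - q) := by
              rw [max_eq_left (by linarith)]
          _ = X ω - z := by ring
          _ ≤ max (X ω - z) 0 := le_max_left _ _
      · rw [Set.indicator_of_notMem (show ω ∉ A from h)]
        push_neg at h
        simp only [sub_zero]
        rw [max_eq_right (by linarith)]
        exact le_max_right _ _
    have hk := key A hAm hpt
    have hpA1 : (P A).toReal ≤ 1 := by linarith [ENNReal.toReal_nonneg (a := P {ω | X ω < q})]
    nlinarith [hk, mul_le_mul_of_nonneg_left hpA (le_of_lt hcpos)]

end aux

section main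

variable {Ω : Type*} [MeasurableSpace Ω] (P : Measure Ω) [IsProbabilityMeasure P]

theorem RU_meas (X : Ω → ℝ) (hm : Measurable X) (hX : Integrable X P)
    (α : ℝ) (hα : α ∈ Set.Ioo (0 : ℝ) 1)
    (q : ℝ) (hq : q = sInf {z : ℝ | ENNReal.ofReal α ≤ P {ω | X ω ≤ z}}) :
    q + (1 / (1 - α)) * ∫ ω, max (X ω - q) 0 ∂P =
      ⨅ z : ℝ, (z + (1 / (1 - α)) * ∫ ω, max (X ω - z) 0 ∂P) := by
  have h1α : 0 < 1 - α := by linarith [hα.2]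
  set S := {z : ℝ | ENNReal.ofReal α ≤ P {ω | X ω ≤ z}} with hS
  have hmono : ∀ z z' : ℝ, z ≤ z' → P {ω | X ω ≤ z} ≤ P {ω | X ω ≤ z'} :=
    fun z z' h => measure_mono (fun ω hω => le_trans hω h)
  have hne : S.Nonempty := by
    have hmon : Monotone (fun n : ℕ => {ω | X ω ≤ (n : ℝ)}) := by
      intro m n hmn ω hω
      simp only [Set.mem_setOf_eq] at hω ⊢
      exact le_trans hω (by exact_mod_cast hmn)
    have hU : ⋃ n : ℕ, {ω | X ω ≤ (n : ℝ)} = Set.univ := by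
      ext ω
      simp only [Set.mem_iUnion, Set.mem_univ, iff_true, Set.mem_setOf_eq]
      exact exists_nat_ge (X ω)
    have ht := tendsto_measure_iUnion_atTop (μ := P) hmon
    rw [hU, measure_univ] at ht
    have hlt : ENNReal.ofReal α < 1 := ENNReal.ofReal_lt_one.2 hα.2
    obtain ⟨n, hn⟩ := (ht.eventually (eventually_gt_nhds hlt)).exists
    exact ⟨(n : ℝ), le_of_lt hn⟩
  have hbdd : BddBelow S := by
    have hant : Antitone (fun n : ℕ => {ω | X ω ≤ -(n : ℝ)}) := by
      intro m n hmn ω hω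
      simp only [Set.mem_setOf_eq] at hω ⊢
      have : (m : ℝ) ≤ (n : ℝ) := by exact_mod_cast hmn
      linarith
    have hI : ⋂ n : ℕ, {ω | X ω ≤ -(n : ℝ)} = ∅ := by
      ext ω
      simp only [Set.mem_iInter, Set.mem_empty_iff_false, iff_false, not_forall,
        Set.mem_setOf_eq, not_le]
      obtain ⟨n, hn⟩ := exists_nat_gt (-X ω)
      exact ⟨n, by linarith⟩
    have ht := tendsto_measure_iInter_atTop (μ := P)
      (s := fun n : ℕ => {ω | X ω ≤ -(n : ℝ)})
      (fun n => (hm measurableSet_Iic).nullMeasurableSet) hant ⟨0, measure_ne_top P _⟩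
    rw [hI, measure_empty] at ht
    have hpos : (0 : ENNReal) < ENNReal.ofReal α := ENNReal.ofReal_pos.2 hα.1
    obtain ⟨n, hn⟩ := (ht.eventually (eventually_lt_nhds hpos)).exists
    refine ⟨-(n : ℝ), fun z hz => ?_⟩
    by_contra h
    push_neg at h
    exact absurd (le_trans hz (hmono z _ h.le)) (not_le.2 hn)
  have hqS : ENNReal.ofReal α ≤ P {ω | X ω ≤ q} := by
    have hant : Antitone (fun n : ℕ => {ω | X ω ≤ q + 1 / ((n : ℝ) + 1)}) := by
      intro m n hmn ω hω
      have : 1 / ((n : ℝ) + 1) ≤ 1 / ((m : ℝ) + 1) := by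
        apply one_div_le_one_div_of_le (by positivity)
        exact_mod_cast Nat.add_le_add_right hmn 1
      simp only [Set.mem_setOf_eq] at hω ⊢
      linarith
    have hI : ⋂ n : ℕ, {ω | X ω ≤ q + 1 / ((n : ℝ) + 1)} = {ω | X ω ≤ q} := by
      ext ω
      simp only [Set.mem_iInter, Set.mem_setOf_eq]
      constructor
      · intro h
        by_contra hc
        push_neg at hc
        obtain ⟨n, hn⟩ := exists_nat_one_div_lt (show (0 : ℝ) < X ω - q by linarith)
        exact absurd (h n) (by push_neg; linarith)
      · intro h n
        have : (0 : ℝ) < 1 / ((n : ℝ) + 1) := by positivity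
        linarith
    have ht := tendsto_measure_iInter_atTop (μ := P)
      (s := fun n : ℕ => {ω | X ω ≤ q + 1 / ((n : ℝ) + 1)})
      (fun n => (hm measurableSet_Iic).nullMeasurableSet) hant ⟨0, measure_ne_top P _⟩
    rw [hI] at ht
    refine ge_of_tendsto' ht (fun n => ?_)
    have hlt : sInf S < q + 1 / ((n : ℝ) + 1) := by
      rw [← hq]
      have : (0 : ℝ) < 1 / ((n : ℝ) + 1) := by positivity
      linarith
    obtain ⟨y, hyS, hy⟩ := exists_lt_of_csInf_lt hne hlt
    exact le_trans hyS (hmono y _ hy.le)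
  have hq2 : P {ω | X ω < q} ≤ ENNReal.ofReal α := by
    have hmon : Monotone (fun n : ℕ => {ω | X ω ≤ q - 1 / ((n : ℝ) + 1)}) := by
      intro m n hmn ω hω
      have : 1 / ((n : ℝ) + 1) ≤ 1 / ((m : ℝ) + 1) := by
        apply one_div_le_one_div_of_le (by positivity)
        exact_mod_cast Nat.add_le_add_right hmn 1
      simp only [Set.mem_setOf_eq] at hω ⊢
      linarith
    have hU : ⋃ n : ℕ, {ω | X ω ≤ q - 1 / ((n : ℝ) + 1)} = {ω | X ω < q} := by
      ext ω
      simp only [Set.mem_iUnion, Set.mem_setOf_eq]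
      constructor
      · rintro ⟨n, hn⟩
        have : (0 : ℝ) < 1 / ((n : ℝ) + 1) := by positivity
        linarith
      · intro h
        obtain ⟨n, hn⟩ := exists_nat_one_div_lt (show (0 : ℝ) < q - X ω by linarith)
        exact ⟨n, by linarith⟩
    have ht := tendsto_measure_iUnion_atTop (μ := P) hmon
    rw [hU] at ht
    refine le_of_tendsto' ht (fun n => ?_)
    have hnot : q - 1 / ((n : ℝ) + 1) ∉ S := by
      apply notMem_of_lt_csInf _ hbdd
      rw [← hq]
      have : (0 : ℝ) < 1 / ((n : ℝ) + 1) := by positivity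
      linarith
    simp only [hS, Set.mem_setOf_eq, not_le] at hnot
    exact hnot.le
  have hmin : ∀ z : ℝ, q + (1 / (1 - α)) * ∫ ω, max (X ω - q) 0 ∂P ≤
      z + (1 / (1 - α)) * ∫ ω, max (X ω - z) 0 ∂P :=
    fun z => RU_core P X hm hX α hα q z hqS hq2
  have hb : BddBelow (Set.range fun z : ℝ => z + (1 / (1 - α)) * ∫ ω, max (X ω - z) 0 ∂P) := by
    refine ⟨q + (1 / (1 - α)) * ∫ ω, max (X ω - q) 0 ∂P, ?_⟩
    rintro x ⟨z, rfl⟩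
    exact hmin z
  exact le_antisymm (le_ciInf hmin) (ciInf_le hb q)

end main

/-- attainment of the Rockafellar–Uryasev infimum: the lower
`α`-quantile `q = inf {z : P(X ≤ z) ≥ α}` minimizes
`z ↦ z + (1/(1−α))·E[max(X − z, 0)]`, so the infimum defining CVaR is attained. -/
theorem rockafellar_uryasev_inf_attained
    {Ω : Type*} [MeasurableSpace Ω] (P : Measure Ω) [IsProbabilityMeasure P]
    (X : Ω → ℝ) (hX : Integrable X P) (α : ℝ) (hα : α ∈ Set.Ioo (0 : ℝ) 1)
    (q : ℝ) (hq : q = sInf {z : ℝ | ENNReal.ofReal α ≤ P {ω | X ω ≤ z}}) :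
    q + (1 / (1 - α)) * ∫ ω, max (X ω - q) 0 ∂P =
      ⨅ z : ℝ, (z + (1 / (1 - α)) * ∫ ω, max (X ω - z) 0 ∂P) := by
  have ham := hX.aemeasurable
  set X' := ham.mk X with hX'def
  have hm' : Measurable X' := ham.measurable_mk
  have hae : X =ᵐ[P] X' := ham.ae_eq_mk
  have hX' : Integrable X' P := hX.congr hae
  have hsets : ∀ z : ℝ, P {ω | X ω ≤ z} = P {ω | X' ω ≤ z} := fun z =>
    measure_congr (hae.mono fun ω h => by
      show (X ω ≤ z) = (X' ω ≤ z)
      rw [h])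
  have hints : ∀ z : ℝ, ∫ ω, max (X ω - z) 0 ∂P = ∫ ω, max (X' ω - z) 0 ∂P := fun z =>
    integral_congr_ae (hae.mono fun ω h => by simp [h])
  simp only [hints]
  exact RU_meas P X' hm' hX' α hα q (by rw [hq]; congr 1; ext z; simp only [Set.mem_setOf_eq, hsets z])
end
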